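/- Let λ = (1+√5)/2 and let v be the column vector v = (1/(6λ+4))·(λ+1, λ, 1, λ, λ, 1, λ, λ+1)ᵀ. Then M_A·v = λ·v and M_H·v = λ·v, the entries of v sum to 1, and every complex eigenvalue z of M_A, as well as every complex eigenvalue z of M_H, satisfies |z| ≤ λ (so λ is the spectral radius of both matrices). -/

import Mathlib

/-!
Both eigenvector equations reduce to `λ² = λ + 1`. For the spectral bound, let `M x = z x` with
`x ≠ 0` and let `u > 0` be a left eigenvector of the entrywise modulus `|M|` for `λ`. Pairing
`|z| |x| ≤ |M| |x|` with `u` gives `|z| (u ⬝ |x|) ≤ (u |M|) ⬝ |x| = λ (u ⬝ |x|)`, and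
`u ⬝ |x| > 0`. For `M_H` the left eigenvector can be taken proportional to `v` itself, for `M_A`
it is `(λ, λ, 1, 1, 1, 1, λ, λ)`.
-/

/-- The Artin transition matrix `M_A`, as a real matrix. -/
def MA : Matrix (Fin 8) (Fin 8) ℝ :=
  !![1,1,0,0,0,0,0,0;
     0,0,1,1,0,0,0,0;
     0,0,0,0,0,0,1,0;
     0,0,0,0,0,0,0,1;
     1,0,0,0,0,0,0,0;
     0,1,0,0,0,0,0,0;
     0,0,0,0,1,1,0,0;
     0,0,0,0,0,0,1,1]

/-- The Hurwitz transition matrix `M_H`, as a real matrix. -/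
def MH : Matrix (Fin 8) (Fin 8) ℝ :=
  !![1,1,0,0,0,0,0,0;
     0,0,1,1,0,0,0,0;
     0,0,0,0,1,0,0,0;
     0,0,0,0,0,0,0,1;
     1,0,0,0,0,0,0,0;
     0,0,0,1,0,0,0,0;
     0,0,0,0,1,1,0,0;
     0,0,0,0,0,0,1,1]

/-- The Artin transition matrix `M_A`, as a complex matrix. -/
def MAC : Matrix (Fin 8) (Fin 8) ℂ :=
  !![1,1,0,0,0,0,0,0;
     0,0,1,1,0,0,0,0;
     0,0,0,0,0,0,1,0;
     0,0,0,0,0,0,0,1;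
     1,0,0,0,0,0,0,0;
     0,1,0,0,0,0,0,0;
     0,0,0,0,1,1,0,0;
     0,0,0,0,0,0,1,1]

/-- The Hurwitz transition matrix `M_H`, as a complex matrix. -/
def MHC : Matrix (Fin 8) (Fin 8) ℂ :=
  !![1,1,0,0,0,0,0,0;
     0,0,1,1,0,0,0,0;
     0,0,0,0,1,0,0,0;
     0,0,0,0,0,0,0,1;
     1,0,0,0,0,0,0,0;
     0,0,0,1,0,0,0,0;
     0,0,0,0,1,1,0,0;
     0,0,0,0,0,0,1,1]

/-- The golden ratio `λ = (1+√5)/2`. -/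
noncomputable def lam : ℝ := (1 + Real.sqrt 5) / 2

/-- The common probability eigenvector `v` of `M_A` and `M_H`. -/
noncomputable def v : Fin 8 → ℝ :=
  (6 * lam + 4)⁻¹ • ![lam + 1, lam, 1, lam, lam, 1, lam, lam + 1]

namespace Matrix

variable {ι 𝕜 : Type*} [Fintype ι]

theorem exists_mulVec_eq_smul_of_mem_spectrum [DecidableEq ι] [Field 𝕜] {A : Matrix ι ι 𝕜}
    {z : 𝕜} (hz : z ∈ spectrum 𝕜 A) : ∃ x ≠ 0, A *ᵥ x = z • x := by
  rw [← spectrum_toLin', ← Module.End.hasEigenvalue_iff_mem_spectrum] at hz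
  obtain ⟨x, hx⟩ := hz.exists_hasEigenvector
  exact ⟨x, hx.2, by simpa using hx.apply_eq_smul⟩

theorem norm_smul_le_mulVec_map_norm_of_mulVec_eq_smul [NormedField 𝕜] {A : Matrix ι ι 𝕜}
    {x : ι → 𝕜} {z : 𝕜} (hx : A *ᵥ x = z • x) :
    ‖z‖ • (fun i ↦ ‖x i‖) ≤ A.map (‖·‖) *ᵥ fun i ↦ ‖x i‖ := fun i ↦
  calc ‖z‖ * ‖x i‖ = ‖∑ j, A i j * x j‖ := by
        rw [← norm_mul, ← smul_eq_mul, ← Pi.smul_apply, ← hx]; rfl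
    _ ≤ ∑ j, ‖A i j * x j‖ := norm_sum_le _ _
    _ = (A.map (‖·‖) *ᵥ fun i ↦ ‖x i‖) i := by simp [mulVec, dotProduct]

theorem norm_le_of_mem_spectrum_of_vecMul_map_norm_le [DecidableEq ι] [NormedField 𝕜]
    {A : Matrix ι ι 𝕜} {u : ι → ℝ} (hu : ∀ i, 0 < u i) {l : ℝ}
    (hl : u ᵥ* A.map (‖·‖) ≤ l • u) {z : 𝕜} (hz : z ∈ spectrum 𝕜 A) : ‖z‖ ≤ l := by
  obtain ⟨x, hx0, hx⟩ := exists_mulVec_eq_smul_of_mem_spectrum hz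
  set y : ι → ℝ := fun i ↦ ‖x i‖
  have hy : 0 ≤ y := fun i ↦ norm_nonneg _
  have huy : 0 < u ⬝ᵥ y := by
    obtain ⟨i, hi⟩ := Function.ne_iff.1 hx0
    exact Finset.sum_pos' (fun j _ ↦ mul_nonneg (hu j).le (hy j))
      ⟨i, Finset.mem_univ i, mul_pos (hu i) (norm_pos_iff.2 hi)⟩
  refine le_of_mul_le_mul_right ?_ huy
  calc ‖z‖ * (u ⬝ᵥ y) = u ⬝ᵥ (‖z‖ • y) := by rw [dotProduct_smul, smul_eq_mul]
    _ ≤ u ⬝ᵥ (A.map (‖·‖) *ᵥ y) := dotProduct_le_dotProduct_of_nonneg_left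
        (norm_smul_le_mulVec_map_norm_of_mulVec_eq_smul hx) fun i ↦ (hu i).le
    _ = (u ᵥ* A.map (‖·‖)) ⬝ᵥ y := dotProduct_mulVec _ _ _
    _ ≤ (l • u) ⬝ᵥ y := dotProduct_le_dotProduct_of_nonneg_right hl hy
    _ = l * (u ⬝ᵥ y) := by rw [smul_dotProduct, smul_eq_mul]

end Matrix

open Matrix

theorem lam_sq : lam ^ 2 = lam + 1 := Real.goldenRatio_sq

theorem lam_pos : 0 < lam := Real.goldenRatio_pos

noncomputable def goldenVec : Fin 8 → ℝ := ![lam + 1, lam, 1, lam, lam, 1, lam, lam + 1]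

noncomputable def leftEigenvecMA : Fin 8 → ℝ := ![lam, lam, 1, 1, 1, 1, lam, lam]

theorem v_eq_smul_goldenVec : v = (6 * lam + 4)⁻¹ • goldenVec := rfl

theorem sum_goldenVec : ∑ i, goldenVec i = 6 * lam + 4 := by
  simp [goldenVec, Fin.sum_univ_eight]; ring

theorem goldenVec_pos (i : Fin 8) : 0 < goldenVec i := by
  fin_cases i <;> simp [goldenVec] <;> linarith [lam_pos]

theorem leftEigenvecMA_pos (i : Fin 8) : 0 < leftEigenvecMA i := by
  fin_cases i <;> simp [leftEigenvecMA, lam_pos]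

theorem MA_mulVec_goldenVec : MA *ᵥ goldenVec = lam • goldenVec := by
  ext i; fin_cases i <;> simp [MA, goldenVec] <;> linarith [lam_sq]

theorem MH_mulVec_goldenVec : MH *ᵥ goldenVec = lam • goldenVec := by
  ext i; fin_cases i <;> simp [MH, goldenVec] <;> linarith [lam_sq]

theorem leftEigenvecMA_vecMul_MA : leftEigenvecMA ᵥ* MA = lam • leftEigenvecMA := by
  ext i; fin_cases i <;> simp [MA, leftEigenvecMA] <;> linarith [lam_sq]

theorem goldenVec_vecMul_MH : goldenVec ᵥ* MH = lam • goldenVec := by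
  ext i; fin_cases i <;> simp [MH, goldenVec] <;> linarith [lam_sq]

theorem map_norm_MAC : MAC.map (‖·‖) = MA := by
  ext i j; fin_cases i <;> fin_cases j <;> simp [MA, MAC]

theorem map_norm_MHC : MHC.map (‖·‖) = MH := by
  ext i j; fin_cases i <;> fin_cases j <;> simp [MH, MHC]

/-- `v` is a probability eigenvector of both `M_A` and `M_H` with eigenvalue `λ = (1+√5)/2`,
and every complex eigenvalue `z` of `M_A` or of `M_H` satisfies `|z| ≤ λ`
(so `λ` is the spectral radius of both matrices). -/
theorem golden_eigenvector_and_spectral_radius :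
    MA.mulVec v = lam • v ∧ MH.mulVec v = lam • v ∧ (∑ i, v i) = 1 ∧
    (∀ z ∈ spectrum ℂ MAC, ‖z‖ ≤ lam) ∧
    (∀ z ∈ spectrum ℂ MHC, ‖z‖ ≤ lam) := by
  refine ⟨?_, ?_, ?_, fun z hz ↦ ?_, fun z hz ↦ ?_⟩
  · rw [v_eq_smul_goldenVec, mulVec_smul, MA_mulVec_goldenVec, smul_comm]
  · rw [v_eq_smul_goldenVec, mulVec_smul, MH_mulVec_goldenVec, smul_comm]
  · simp only [v_eq_smul_goldenVec, Pi.smul_apply, smul_eq_mul, ← Finset.mul_sum, sum_goldenVec]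
    exact inv_mul_cancel₀ (by linarith [lam_pos])
  · exact norm_le_of_mem_spectrum_of_vecMul_map_norm_le leftEigenvecMA_pos
      (map_norm_MAC ▸ leftEigenvecMA_vecMul_MA).le hz
  · exact norm_le_of_mem_spectrum_of_vecMul_map_norm_le goldenVec_pos
      (map_norm_MHC ▸ goldenVec_vecMul_MH).le hz
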